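/- arXiv:math/0409068 — 2 statements merged into one kernel-verified Lean document; each statement's English description precedes it below -/
import Mathlib

section
/- The critical cardinalities of the properties Sfin(Γ,Τ) and Sfin(C_Γ,C_Τ) are both equal to the bounding number 𝔟; that is, the minimal cardinality of a space not satisfying Sfin(Γ,Τ) equals 𝔟, and likewise for Sfin(C_Γ,C_Τ). -/
open Set Filter Cardinal
open scoped Classical

noncomputable section

/-- The Cantor space `2^ℕ`. -/
abbrev Cantor := ℕ → Bool

/-- Arrays: elements of `2^(ℕ×ℕ)`. -/
abbrev Arr := ℕ × ℕ → Bool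

/-- A γ-array: every row is eventually 1. -/
def IsGammaArray (A : Arr) : Prop := ∀ n, ∀ᶠ m in atTop, A (n, m) = true

/-- A γ-family: a set of γ-arrays. -/
def GammaFamily (𝒜 : Set Arr) : Prop := ∀ A ∈ 𝒜, IsGammaArray A

/-- A family of arrays is finitely τ-diagonalizable. -/
def FinTauDiag (𝒜 : Set Arr) : Prop :=
  ∃ F : ℕ → Finset ℕ,
    (∀ A ∈ 𝒜, ∃ᶠ n in atTop, ∃ m ∈ F n, A (n, m) = true) ∧
    (∀ A ∈ 𝒜, ∀ B ∈ 𝒜,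
      (∀ᶠ n in atTop, ∀ m ∈ F n, A (n, m) ≤ B (n, m)) ∨
      (∀ᶠ n in atTop, ∀ m ∈ F n, B (n, m) ≤ A (n, m)))

/-- A family of arrays is semi τ-diagonalizable (via a partial function with domain `D`). -/
def SemiTauDiag (𝒜 : Set Arr) : Prop :=
  ∃ (D : Set ℕ) (g : ℕ → ℕ),
    (∀ A ∈ 𝒜, ∃ᶠ n in atTop, n ∈ D ∧ A (n, g n) = true) ∧
    (∀ A ∈ 𝒜, ∀ B ∈ 𝒜,
      (∀ᶠ n in atTop, n ∈ D → A (n, g n) ≤ B (n, g n)) ∨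
      (∀ᶠ n in atTop, n ∈ D → B (n, g n) ≤ A (n, g n)))

/-- A τ-family of arrays. -/
def TauFamily (𝒜 : Set Arr) : Prop :=
  (∀ A ∈ 𝒜, ∀ n, ∃ᶠ m in atTop, A (n, m) = true) ∧
  (∀ A ∈ 𝒜, ∀ B ∈ 𝒜, ∀ n,
    (∀ᶠ m in atTop, A (n, m) ≤ B (n, m)) ∨
    (∀ᶠ m in atTop, B (n, m) ≤ A (n, m)))

/-- A family of arrays is τ-diagonalizable. -/
def TauDiag (𝒜 : Set Arr) : Prop :=
  ∃ g : ℕ → ℕ,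
    (∀ A ∈ 𝒜, ∃ᶠ n in atTop, A (n, g n) = true) ∧
    (∀ A ∈ 𝒜, ∀ B ∈ 𝒜,
      (∀ᶠ n in atTop, A (n, g n) ≤ B (n, g n)) ∨
      (∀ᶠ n in atTop, B (n, g n) ≤ A (n, g n)))

/-- A family of arrays is o-diagonalizable. -/
def ODiag (𝒜 : Set Arr) : Prop :=
  ∃ g : ℕ → ℕ, ∀ A ∈ 𝒜, ∃ n, A (n, g n) = true

/-- An ω-family of arrays: rows frequently 1 and, for each `n`,
the family of the `n`-th rows is centered. -/
def OmegaFamily (𝒜 : Set Arr) : Prop :=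
  (∀ A ∈ 𝒜, ∀ n, ∃ᶠ m in atTop, A (n, m) = true) ∧
  (∀ n, ∀ 𝒜' ⊆ 𝒜, 𝒜'.Finite → {m | ∀ A ∈ 𝒜', A (n, m) = true}.Infinite)

/-- The bounding number 𝔟. -/
def bNum : Cardinal :=
  sInf {c | ∃ F : Set (ℕ → ℕ), Cardinal.mk F = c ∧
    ¬ ∃ g : ℕ → ℕ, ∀ f ∈ F, ∀ᶠ n in atTop, f n ≤ g n}

/-- The splitting number 𝔰. -/
def sNum : Cardinal :=
  sInf {c | ∃ S : Set (Set ℕ), Cardinal.mk S = c ∧ (∀ s ∈ S, s.Infinite) ∧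
    ∀ a : Set ℕ, a.Infinite → ∃ s ∈ S, (a ∩ s).Infinite ∧ (a \ s).Infinite}

/-- The tower number 𝔱. -/
def tNum : Cardinal :=
  sInf {c | ∃ T : Set (Set ℕ), Cardinal.mk T = c ∧ (∀ t ∈ T, t.Infinite) ∧
    (∀ a ∈ T, ∀ b ∈ T, (a \ b).Finite ∨ (b \ a).Finite) ∧
    ¬ ∃ a : Set ℕ, a.Infinite ∧ ∀ t ∈ T, (a \ t).Finite}

/-- cov(M): the least number of meager sets covering the Baire space. -/
def covM : Cardinal :=
  sInf {c | ∃ 𝒞 : Set (Set (ℕ → ℕ)), Cardinal.mk 𝒞 = c ∧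
    (∀ M ∈ 𝒞, IsMeagre M) ∧ ⋃₀ 𝒞 = Set.univ}

/-- The o-diagonalization number: the minimal cardinality of a τ-family
which is not o-diagonalizable. -/
def odNum : Cardinal :=
  sInf {c | ∃ 𝒜 : Set Arr, Cardinal.mk 𝒜 = c ∧ TauFamily 𝒜 ∧ ¬ ODiag 𝒜}

section Covers

variable (α : Type*)

/-- A countable cover of the space `α`. -/
def CountCover (𝒰 : Set (Set α)) : Prop :=
  𝒰.Countable ∧ ⋃₀ 𝒰 = Set.univ ∧ Set.univ ∉ 𝒰

/-- A (countable) γ-cover. -/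
def GammaCover (𝒰 : Set (Set α)) : Prop :=
  CountCover α 𝒰 ∧ 𝒰.Infinite ∧ ∀ x : α, {U | U ∈ 𝒰 ∧ x ∉ U}.Finite

/-- A (countable) τ-cover. -/
def TauCover (𝒰 : Set (Set α)) : Prop :=
  CountCover α 𝒰 ∧ (∀ x : α, {U | U ∈ 𝒰 ∧ x ∈ U}.Infinite) ∧
  ∀ x y : α, {U | U ∈ 𝒰 ∧ x ∈ U ∧ y ∉ U}.Finite ∨ {U | U ∈ 𝒰 ∧ y ∈ U ∧ x ∉ U}.Finite

/-- A (countable) ω-cover. -/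
def OmegaCover (𝒰 : Set (Set α)) : Prop :=
  CountCover α 𝒰 ∧ ∀ F : Set α, F.Finite → ∃ U ∈ 𝒰, F ⊆ U

variable [TopologicalSpace α]

/-- All members are open. -/
def OpenFam (𝒰 : Set (Set α)) : Prop := ∀ U ∈ 𝒰, IsOpen U

/-- All members are clopen. -/
def ClopenFam (𝒰 : Set (Set α)) : Prop := ∀ U ∈ 𝒰, IsClopen U

/-- The class O of countable open covers. -/
def OCov (𝒰 : Set (Set α)) : Prop := CountCover α 𝒰 ∧ OpenFam α 𝒰
/-- The class Γ of countable open γ-covers. -/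
def OGamma (𝒰 : Set (Set α)) : Prop := GammaCover α 𝒰 ∧ OpenFam α 𝒰
/-- The class Τ of countable open τ-covers. -/
def OTau (𝒰 : Set (Set α)) : Prop := TauCover α 𝒰 ∧ OpenFam α 𝒰
/-- The class Ω of countable open ω-covers. -/
def OOmega (𝒰 : Set (Set α)) : Prop := OmegaCover α 𝒰 ∧ OpenFam α 𝒰

/-- The class C of countable clopen covers. -/
def KCov (𝒰 : Set (Set α)) : Prop := CountCover α 𝒰 ∧ ClopenFam α 𝒰
/-- The class C_Γ of countable clopen γ-covers. -/
def KGamma (𝒰 : Set (Set α)) : Prop := GammaCover α 𝒰 ∧ ClopenFam α 𝒰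
/-- The class C_Τ of countable clopen τ-covers. -/
def KTau (𝒰 : Set (Set α)) : Prop := TauCover α 𝒰 ∧ ClopenFam α 𝒰

end Covers

/-- The selection principle S1(𝒜,ℬ). -/
def S1 (α : Type*) (𝒜 ℬ : Set (Set α) → Prop) : Prop :=
  ∀ U : ℕ → Set (Set α), (∀ n, 𝒜 (U n)) →
    ∃ V : ℕ → Set α, (∀ n, V n ∈ U n) ∧ ℬ (range V)

/-- The selection principle Sfin(𝒜,ℬ). -/
def SFin (α : Type*) (𝒜 ℬ : Set (Set α) → Prop) : Prop :=
  ∀ U : ℕ → Set (Set α), (∀ n, 𝒜 (U n)) →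
    ∃ F : ℕ → Set (Set α), (∀ n, (F n).Finite ∧ F n ⊆ U n) ∧ ℬ (⋃ n, F n)

/-- The selection principle Ufin(𝒜,ℬ). -/
def UFin (α : Type*) (𝒜 ℬ : Set (Set α) → Prop) : Prop :=
  ∀ U : ℕ → Set (Set α), (∀ n, 𝒜 (U n)) →
    (∀ n, ¬ ∃ F : Set (Set α), F ⊆ U n ∧ F.Finite ∧ ⋃₀ F = Set.univ) →
    ∃ F : ℕ → Set (Set α), (∀ n, (F n).Finite ∧ F n ⊆ U n) ∧
      ℬ (range fun n => ⋃₀ F n)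

/-- The critical cardinality non(P) of a property `P` of sets of reals:
the minimal cardinality of an infinite subset of the Cantor space not satisfying `P`. -/
def nonP (P : Set Cantor → Prop) : Cardinal :=
  sInf {c | ∃ X : Set Cantor, X.Infinite ∧ ¬ P X ∧ Cardinal.mk X = c}

/-- The collection of cardinalities of witnessing families of `f`-sequences for `θ_f`. -/
def ThetaSet (f : ℕ → ℕ) : Set Cardinal :=
  {c | ∃ ℱ : Set (ℕ → Set ℕ), Cardinal.mk ℱ = c ∧
    (∀ σ ∈ ℱ, ∀ n, σ n ⊆ Iio (f n)) ∧
    (∀ σ ∈ ℱ, ∀ᶠ n in atTop, (σ n).Nonempty) ∧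
    (∀ σ ∈ ℱ, ∀ η ∈ ℱ, (∀ᶠ n in atTop, σ n ⊆ η n) ∨ (∀ᶠ n in atTop, η n ⊆ σ n)) ∧
    ¬ ∃ g : ℕ → ℕ, ∀ σ ∈ ℱ, ∃ n, g n ∈ σ n}

/-- The cardinal θ_f; equal to 𝔠⁺ if no witnessing family exists. -/
def theta (f : ℕ → ℕ) : Cardinal :=
  if (ThetaSet f).Nonempty then sInf (ThetaSet f) else Order.succ Cardinal.continuum

/-- θ* = min over f (with all values ≥ 2) of θ_f. -/
def thetaStar : Cardinal :=
  sInf {c | ∃ f : ℕ → ℕ, (∀ n, 2 ≤ f n) ∧ theta f = c}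

/-- The collection of cardinalities of witnessing families for `𝔈_f`. -/
def ESet (f : ℕ → ℕ) : Set Cardinal :=
  {c | ∃ F : Set (ℕ → ℕ), Cardinal.mk F = c ∧ (∀ h ∈ F, ∀ n, h n < f n) ∧
    ∀ g : ℕ → ℕ, ∃ h ∈ F, ∀ n, h n ≠ g n}

/-- The cardinal 𝔈_f; equal to 𝔠⁺ if no witnessing family exists. -/
def ENum (f : ℕ → ℕ) : Cardinal :=
  if (ESet f).Nonempty then sInf (ESet f) else Order.succ Cardinal.continuum

/-- 𝔈* = min over f (with all values ≥ 1) of 𝔈_f. -/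
def EStar : Cardinal :=
  sInf {c | ∃ f : ℕ → ℕ, (∀ n, 1 ≤ f n) ∧ ENum f = c}


/-!
If `|X| < 𝔟`, enumerate each γ-cover `𝒰ₙ` as `Uₙ₀, Uₙ₁, …`; one function eventually dominating
all the functions `n ↦ (least k with x ∈ Uₙⱼ for all j ≥ k)`, `x ∈ X`, picks one set from each
cover so that every point lies in almost all picked sets, which is a γ-cover and hence a τ-cover.

Conversely, fix `𝔟` monotone functions `G` with no `≤*`-bound and let `X` code, as points of
`2^(ℕ×ℕ)`, the arrays "row `n` is `1` from `f n` on" and "row `n` vanishes exactly on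
`[f n, g n)`" for `f, g ∈ G`, together with the arrays vanishing at a single entry only.
The sets "entry `(n, m)` is `1`", `m ∈ ℕ`, form a clopen γ-cover `𝒰ₙ`. If finite selections
from the `𝒰ₙ` formed a τ-cover, the τ-comparability of the gap arrays would give `g ∈ G` such
that every window `[g n, h n)`, `h ∈ G`, contains only finitely many selected entries, while
infinitely many selected entries lie to the right of `g`; one such entry in each late column
then bounds all of `G`.
-/

section Bounding

theorem bNum_le_mk_of_unbounded {F : Set (ℕ → ℕ)}
    (h : ¬ ∃ g : ℕ → ℕ, ∀ f ∈ F, ∀ᶠ n in atTop, f n ≤ g n) : bNum ≤ #F :=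
  csInf_le' ⟨F, rfl, h⟩

theorem exists_bound_of_mk_lt_bNum {F : Set (ℕ → ℕ)} (h : #F < bNum) :
    ∃ g : ℕ → ℕ, ∀ f ∈ F, ∀ᶠ n in atTop, f n ≤ g n := by
  by_contra hF
  exact (bNum_le_mk_of_unbounded hF).not_gt h

theorem exists_bound_of_finite {F : Set (ℕ → ℕ)} (hF : F.Finite) :
    ∃ g : ℕ → ℕ, ∀ f ∈ F, ∀ᶠ n in atTop, f n ≤ g n :=
  ⟨fun n => hF.toFinset.sup (· n), fun _ hf =>
    .of_forall fun n => Finset.le_sup (f := fun f : ℕ → ℕ => f n) (hF.mem_toFinset.2 hf)⟩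

theorem exists_unbounded_mk_eq_bNum :
    ∃ F : Set (ℕ → ℕ), #F = bNum ∧ ¬ ∃ g : ℕ → ℕ, ∀ f ∈ F, ∀ᶠ n in atTop, f n ≤ g n := by
  have hne : {c | ∃ F : Set (ℕ → ℕ), #F = c ∧
      ¬ ∃ g : ℕ → ℕ, ∀ f ∈ F, ∀ᶠ n in atTop, f n ≤ g n}.Nonempty := by
    refine ⟨_, univ, rfl, ?_⟩
    rintro ⟨g, hg⟩
    obtain ⟨n, hn⟩ := (hg (g + 1) trivial).exists
    simp at hn
  exact csInf_mem hne

theorem aleph0_le_bNum : ℵ₀ ≤ bNum := by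
  obtain ⟨F, hF, hunb⟩ := exists_unbounded_mk_eq_bNum
  have hinf : F.Infinite := fun hfin => hunb (exists_bound_of_finite hfin)
  exact hF ▸ infinite_iff.1 hinf.to_subtype

theorem exists_monotone_unbounded_mk_eq_bNum :
    ∃ G : Set (ℕ → ℕ), (∀ f ∈ G, Monotone f) ∧
      (¬ ∃ g : ℕ → ℕ, ∀ f ∈ G, ∀ᶠ n in atTop, f n ≤ g n) ∧ #G = bNum := by
  obtain ⟨F, hF, hunb⟩ := exists_unbounded_mk_eq_bNum
  have hGunb : ¬ ∃ g : ℕ → ℕ, ∀ f ∈ (fun f => ⇑(partialSups f)) '' F,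
      ∀ᶠ n in atTop, f n ≤ g n := by
    rintro ⟨g, hg⟩
    exact hunb ⟨g, fun f hf => (hg _ (mem_image_of_mem _ hf)).mono
      fun n hn => (le_partialSups f n).trans hn⟩
  refine ⟨_, ?_, hGunb, le_antisymm (mk_image_le.trans hF.le) (bNum_le_mk_of_unbounded hGunb)⟩
  rintro _ ⟨f, -, rfl⟩
  exact (partialSups f).monotone

end Bounding

section GammaCovers

variable {α : Type*}

theorem GammaCover.tauCover {𝒰 : Set (Set α)} (h : GammaCover α 𝒰) : TauCover α 𝒰 := by
  obtain ⟨hcount, hinf, hfin⟩ := h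
  refine ⟨hcount, fun x => (hinf.sdiff (hfin x)).mono fun U hU => ⟨hU.1, ?_⟩,
    fun x y => Or.inl ((hfin y).subset fun U hU => ⟨hU.1, hU.2.2⟩)⟩
  by_contra hxU
  exact hU.2 ⟨hU.1, hxU⟩

theorem gammaCover_range {V : ℕ → Set α} (hV : ∀ n, V n ≠ Set.univ)
    (hx : ∀ x, ∀ᶠ n in atTop, x ∈ V n) : GammaCover α (range V) := by
  have hfin : ∀ x, {n | x ∉ V n}.Finite := fun x => by
    simpa only [← Nat.cofinite_eq_atTop, eventually_cofinite] using hx x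
  refine ⟨⟨countable_range V, ?_, fun ⟨n, hn⟩ => hV n hn⟩, fun hrange => ?_, fun x => ?_⟩
  · rw [sUnion_range, eq_univ_iff_forall]
    exact fun x => mem_iUnion.2 (hx x).exists
  · have := hrange.to_subtype
    obtain ⟨⟨W, n, rfl⟩, hW⟩ := Finite.exists_infinite_fiber (rangeFactorization V)
    have hfreq : ∃ᶠ k in atTop, V k = V n := by
      rw [Nat.frequently_atTop_iff_infinite]
      simpa only [infinite_coe_iff, preimage, mem_singleton_iff, rangeFactorization,
        Subtype.ext_iff] using hW
    refine hV n (eq_univ_of_forall fun x => ?_)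
    obtain ⟨k, hk, hxk⟩ := (hfreq.and_eventually (hx x)).exists
    exact hk ▸ hxk
  · refine ((hfin x).image V).subset ?_
    rintro _ ⟨⟨n, rfl⟩, hxn⟩
    exact ⟨n, hxn, rfl⟩

theorem SFin.kGamma_kTau [TopologicalSpace α] (h : SFin α (OGamma α) (OTau α)) :
    SFin α (KGamma α) (KTau α) := by
  intro U hU
  obtain ⟨F, hF, hτ, -⟩ := h U fun n => ⟨(hU n).1, fun V hV => ((hU n).2 V hV).isOpen⟩
  refine ⟨F, hF, hτ, fun V hV => ?_⟩
  obtain ⟨n, hn⟩ := mem_iUnion.1 hV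
  exact (hU n).2 V ((hF n).2 hn)

end GammaCovers

theorem exists_eventually_mem_of_mk_lt_bNum {α : Type} (hα : #α < bNum) {U : ℕ → Set (Set α)}
    (hinf : ∀ n, (U n).Infinite) (hfin : ∀ n x, {V | V ∈ U n ∧ x ∉ V}.Finite) :
    ∃ V : ℕ → Set α, (∀ n, V n ∈ U n) ∧ ∀ x, ∀ᶠ n in atTop, x ∈ V n := by
  let e n : ℕ → Set α := fun k => (hinf n).natEmbedding _ k
  have he : ∀ n, Function.Injective (e n) := fun n =>
    Subtype.val_injective.comp ((hinf n).natEmbedding _).injective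
  have hev : ∀ x n, ∀ᶠ k in atTop, x ∈ e n k := fun x n => by
    rw [← Nat.cofinite_eq_atTop, eventually_cofinite]
    exact ((hfin n x).preimage (he n).injOn).subset fun k hk => ⟨Subtype.coe_prop _, hk⟩
  choose N hN using fun x n => eventually_atTop.1 (hev x n)
  obtain ⟨g, hg⟩ := exists_bound_of_mk_lt_bNum (mk_range_le.trans_lt hα : #(range N) < bNum)
  exact ⟨fun n => e n (g n), fun n => Subtype.coe_prop _,
    fun x => (hg _ ⟨x, rfl⟩).mono fun n hn => hN x n _ hn⟩

theorem sFin_gammaCover_tauCover_of_mk_lt_bNum {α : Type} (hα : #α < bNum) (P : Set α → Prop) :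
    SFin α (fun 𝒰 => GammaCover α 𝒰 ∧ ∀ U ∈ 𝒰, P U)
      (fun 𝒰 => TauCover α 𝒰 ∧ ∀ U ∈ 𝒰, P U) := by
  intro U hU
  obtain ⟨V, hVU, hV⟩ :=
    exists_eventually_mem_of_mk_lt_bNum hα (fun n => (hU n).1.2.1) (fun n => (hU n).1.2.2)
  refine ⟨fun n => {V n}, fun n => ⟨finite_singleton _, singleton_subset_iff.2 (hVU n)⟩, ?_⟩
  rw [iUnion_singleton_eq_range]
  refine ⟨(gammaCover_range (fun n hn => (hU n).1.1.2.2 (hn ▸ hVU n)) hV).tauCover, ?_⟩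
  rintro _ ⟨n, rfl⟩
  exact (hU n).2 _ (hVU n)

section Selection

theorem exists_forall_of_rel_or_rel {β : Type*} {G : Set β} (hG : G.Nonempty) {R : β → β → Prop}
    (hR : ∀ f ∈ G, ∀ g ∈ G, ∀ h ∈ G, R f g ∨ R g h) : ∃ g ∈ G, ∀ h ∈ G, R g h := by
  by_cases hall : ∀ f ∈ G, ∀ g ∈ G, R f g
  · obtain ⟨g, hg⟩ := hG
    exact ⟨g, hg, hall g hg⟩
  · push Not at hall
    obtain ⟨f, hf, g, hg, hfg⟩ := hall
    exact ⟨g, hg, fun h hh => (hR f hf g hg h hh).resolve_left hfg⟩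

theorem exists_le_fst_of_infinite {K : Set (ℕ × ℕ)} (hK : K.Infinite)
    (hcol : ∀ n, {m | (n, m) ∈ K}.Finite) (k : ℕ) : ∃ p ∈ K, k ≤ p.1 := by
  by_contra! h
  refine hK (((finite_Iio k).biUnion fun n _ => (hcol n).image (Prod.mk n)).subset ?_)
  intro p hp
  exact mem_biUnion (h p hp) ⟨p.2, hp, rfl⟩

theorem eventually_le_of_finite_lt {K : Set (ℕ × ℕ)} {φ : ℕ → ℕ × ℕ}
    (hφ : ∀ k, φ k ∈ K ∧ k ≤ (φ k).1) {h : ℕ → ℕ} (hh : Monotone h)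
    (hfin : {p ∈ K | p.2 < h p.1}.Finite) : ∀ᶠ k in atTop, h k ≤ (φ k).2 := by
  obtain ⟨M, hM⟩ := (hfin.image Prod.fst).bddAbove
  filter_upwards [eventually_gt_atTop M] with k hk
  by_contra! hlt
  have hbad : φ k ∈ {p ∈ K | p.2 < h p.1} := ⟨(hφ k).1, hlt.trans_le (hh (hφ k).2)⟩
  have := hM (mem_image_of_mem _ hbad)
  have := (hφ k).2
  omega

theorem exists_bound_of_selection {G : Set (ℕ → ℕ)} (hmono : ∀ f ∈ G, Monotone f)
    {S : Set (ℕ × ℕ)} (hcol : ∀ n, {m | (n, m) ∈ S}.Finite)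
    (hupper : ∀ f ∈ G, {p ∈ S | f p.1 ≤ p.2}.Infinite)
    (hwindow : ∀ f ∈ G, ∀ g ∈ G, ∀ h ∈ G,
      {p ∈ S | f p.1 ≤ p.2 ∧ p.2 < g p.1}.Finite ∨ {p ∈ S | g p.1 ≤ p.2 ∧ p.2 < h p.1}.Finite) :
    ∃ b : ℕ → ℕ, ∀ f ∈ G, ∀ᶠ n in atTop, f n ≤ b n := by
  rcases G.eq_empty_or_nonempty with rfl | hG
  · exact ⟨0, by simp⟩
  obtain ⟨g, hg, hgfin⟩ := exists_forall_of_rel_or_rel hG hwindow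
  choose φ hφ using exists_le_fst_of_infinite (hupper g hg)
    fun n => (hcol n).subset fun m hm => hm.1
  refine ⟨fun k => (φ k).2, fun h hh => eventually_le_of_finite_lt hφ (hmono h hh) ?_⟩
  refine (hgfin h hh).subset ?_
  rintro p ⟨⟨hpS, hgp⟩, hph⟩
  exact ⟨hpS, hgp, hph⟩

end Selection

section Arrays

def upperArray (f : ℕ → ℕ) : Arr := fun p => decide (f p.1 ≤ p.2)

def gapArray (f g : ℕ → ℕ) : Arr := fun p => decide (p.2 < f p.1 ∨ g p.1 ≤ p.2)

def puncturedArray (q : ℕ × ℕ) : Arr := fun p => decide (p ≠ q)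

def witnessArrays (G : Set (ℕ → ℕ)) : Set Arr :=
  upperArray '' G ∪ image2 gapArray G G ∪ range puncturedArray

@[simp]
theorem upperArray_eq_true {f : ℕ → ℕ} {p : ℕ × ℕ} : upperArray f p = true ↔ f p.1 ≤ p.2 := by
  simp [upperArray]

@[simp]
theorem gapArray_eq_true {f g : ℕ → ℕ} {p : ℕ × ℕ} :
    gapArray f g p = true ↔ p.2 < f p.1 ∨ g p.1 ≤ p.2 := by
  simp [gapArray]

@[simp]
theorem gapArray_eq_false {f g : ℕ → ℕ} {p : ℕ × ℕ} :
    gapArray f g p = false ↔ f p.1 ≤ p.2 ∧ p.2 < g p.1 := by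
  simp [gapArray]

@[simp]
theorem puncturedArray_eq_true {q p : ℕ × ℕ} : puncturedArray q p = true ↔ p ≠ q := by
  simp [puncturedArray]

theorem upperArray_injective : Function.Injective upperArray := by
  intro f g h
  funext n
  have hf := congrFun h (n, f n)
  have hg := congrFun h (n, g n)
  simp only [upperArray, decide_eq_decide] at hf hg
  omega

theorem gammaFamily_witnessArrays (G : Set (ℕ → ℕ)) : GammaFamily (witnessArrays G) := by
  rintro _ ((⟨f, -, rfl⟩ | ⟨f, -, g, -, rfl⟩) | ⟨q, rfl⟩) n
  · simpa using eventually_ge_atTop (f n)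
  · simpa using (eventually_ge_atTop (g n)).mono fun m hm => Or.inr hm
  · filter_upwards [eventually_gt_atTop q.2] with m hm
    simpa [Prod.ext_iff] using fun _ => hm.ne'

theorem mk_witnessArrays {G : Set (ℕ → ℕ)} (hG : #G = bNum) : #(witnessArrays G) = bNum := by
  refine le_antisymm ?_ ?_
  · have hgap : #(image2 gapArray G G) ≤ bNum := by
      rw [← image_prod]
      refine mk_image_le.trans ?_
      rw [mk_congr (Equiv.Set.prod G G), mk_prod, lift_id, hG, mul_eq_self aleph0_le_bNum]
    have hpunc : #(range puncturedArray) ≤ ℵ₀ := mk_le_aleph0_iff.2 (countable_range _).to_subtype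
    calc #(witnessArrays G)
        ≤ #(upperArray '' G) + #(image2 gapArray G G) + #(range puncturedArray) :=
          (mk_union_le _ _).trans (add_le_add (mk_union_le _ _) le_rfl)
      _ ≤ bNum + bNum + ℵ₀ := add_le_add (add_le_add (hG ▸ mk_image_le) hgap) hpunc
      _ = bNum := by
          rw [add_eq_self aleph0_le_bNum, add_eq_left aleph0_le_bNum aleph0_le_bNum]
  · calc bNum = #(upperArray '' G) := by rw [mk_image_eq upperArray_injective, hG]
      _ ≤ #(witnessArrays G) := mk_le_mk_of_subset (subset_union_left.trans subset_union_left)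

end Arrays

section ArraySpace

def cantorEquivArr : Cantor ≃ Arr := Nat.pairEquiv.symm.arrowCongr (Equiv.refl Bool)

def arraySpace (𝒜 : Set Arr) : Set Cantor := cantorEquivArr ⁻¹' 𝒜

variable {𝒜 : Set Arr}

def cell (𝒜 : Set Arr) (p : ℕ × ℕ) : Set (arraySpace 𝒜) := {x | cantorEquivArr x p = true}

def arrayPoint {A : Arr} (hA : A ∈ 𝒜) : arraySpace 𝒜 :=
  ⟨cantorEquivArr.symm A, by simpa [arraySpace] using hA⟩

@[simp]
theorem arrayPoint_mem_cell {A : Arr} (hA : A ∈ 𝒜) {p : ℕ × ℕ} :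
    arrayPoint hA ∈ cell 𝒜 p ↔ A p = true := by
  simp [arrayPoint, cell]

theorem isClopen_cell (p : ℕ × ℕ) : IsClopen (cell 𝒜 p) :=
  ((isClopen_discrete {true}).preimage (f := fun y : Cantor => cantorEquivArr y p)
    (continuous_apply _)).preimage continuous_subtype_val

theorem TauCover.infinite_of_image_cell {S : Set (ℕ × ℕ)}
    (hτ : TauCover (arraySpace 𝒜) (cell 𝒜 '' S)) {A : Arr} (hA : A ∈ 𝒜) :
    {p ∈ S | A p = true}.Infinite := fun hfin => by
  refine hτ.2.1 (arrayPoint hA) ((hfin.image (cell 𝒜)).subset ?_)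
  rintro _ ⟨⟨p, hp, rfl⟩, hx⟩
  exact ⟨p, ⟨hp, (arrayPoint_mem_cell hA).1 hx⟩, rfl⟩

variable (hpunc : ∀ q, puncturedArray q ∈ 𝒜)
include hpunc

theorem cell_ne_univ (p : ℕ × ℕ) : cell 𝒜 p ≠ Set.univ := fun h =>
  puncturedArray_eq_true.1 ((arrayPoint_mem_cell (hpunc p)).1 (h ▸ mem_univ _)) rfl

theorem cell_injective : Function.Injective (cell 𝒜) := by
  intro p q h
  by_contra hpq
  have hq : arrayPoint (hpunc p) ∈ cell 𝒜 q := by simpa using Ne.symm hpq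
  simp [← h] at hq

theorem kGamma_range_cell (hγ : GammaFamily 𝒜) (n : ℕ) :
    KGamma (arraySpace 𝒜) (range fun m => cell 𝒜 (n, m)) := by
  refine ⟨gammaCover_range (fun m => cell_ne_univ hpunc _) fun x => hγ _ x.2 n, ?_⟩
  rintro _ ⟨m, rfl⟩
  exact isClopen_cell _

theorem TauCover.finite_or_finite_of_image_cell {S : Set (ℕ × ℕ)}
    (hτ : TauCover (arraySpace 𝒜) (cell 𝒜 '' S)) {A B : Arr} (hA : A ∈ 𝒜) (hB : B ∈ 𝒜) :
    {p ∈ S | A p = true ∧ B p = false}.Finite ∨ {p ∈ S | B p = true ∧ A p = false}.Finite := by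
  have key : ∀ {A B : Arr} (hA : A ∈ 𝒜) (hB : B ∈ 𝒜),
      {U | U ∈ cell 𝒜 '' S ∧ arrayPoint hA ∈ U ∧ arrayPoint hB ∉ U}.Finite →
      {p ∈ S | A p = true ∧ B p = false}.Finite := fun hA hB hfin => by
    refine Finite.of_finite_image (hfin.subset ?_) (cell_injective hpunc).injOn
    rintro _ ⟨p, ⟨hp, hAp, hBp⟩, rfl⟩
    exact ⟨mem_image_of_mem _ hp, by simpa using hAp, by simpa using hBp⟩
  exact (hτ.2.2 _ _).imp (key hA hB) (key hB hA)

end ArraySpace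

theorem not_sFin_kGamma_kTau_witnessArrays {G : Set (ℕ → ℕ)} (hmono : ∀ f ∈ G, Monotone f)
    (hunb : ¬ ∃ g : ℕ → ℕ, ∀ f ∈ G, ∀ᶠ n in atTop, f n ≤ g n) :
    ¬ SFin (arraySpace (witnessArrays G)) (KGamma _) (KTau _) := by
  have hpunc : ∀ q, puncturedArray q ∈ witnessArrays G := fun q => Or.inr ⟨q, rfl⟩
  have hupper {f} (hf : f ∈ G) : upperArray f ∈ witnessArrays G :=
    Or.inl (Or.inl (mem_image_of_mem _ hf))
  have hgap {f g} (hf : f ∈ G) (hg : g ∈ G) : gapArray f g ∈ witnessArrays G :=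
    Or.inl (Or.inr (mem_image2_of_mem hf hg))
  intro hS
  obtain ⟨F, hF, hτ, -⟩ := hS _ (kGamma_range_cell hpunc (gammaFamily_witnessArrays G))
  set S : Set (ℕ × ℕ) := {p | cell _ p ∈ F p.1}
  have hFS : ⋃ n, F n = cell _ '' S := by
    ext U
    simp only [mem_iUnion, mem_image]
    constructor
    · rintro ⟨n, hn⟩
      obtain ⟨m, rfl⟩ := (hF n).2 hn
      exact ⟨(n, m), hn, rfl⟩
    · rintro ⟨p, hp, rfl⟩
      exact ⟨p.1, hp⟩
  rw [hFS] at hτ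
  have hcol : ∀ n, {m | (n, m) ∈ S}.Finite := fun n =>
    show ((fun m => cell _ (n, m)) ⁻¹' F n).Finite from
      (hF n).1.preimage ((cell_injective hpunc).comp (Prod.mk_right_injective n)).injOn
  refine hunb (exists_bound_of_selection hmono hcol
    (fun f hf => by simpa using hτ.infinite_of_image_cell (hupper hf))
    fun f hf g hg h hh => ?_)
  -- `gapArray g h` and `gapArray f g` differ exactly on the windows `[f, g)` and `[g, h)`.
  refine (hτ.finite_or_finite_of_image_cell hpunc (hgap hg hh) (hgap hf hg)).imp
    (fun hfin => hfin.subset ?_) (fun hfin => hfin.subset ?_)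
  · rintro p ⟨hp, hfp, hgp⟩
    exact ⟨hp, by simp [hgp], by simp [hfp, hgp]⟩
  · rintro p ⟨hp, hgp, hhp⟩
    exact ⟨hp, by simp [hgp], by simp [hgp, hhp]⟩

theorem exists_infinite_not_sFin_kGamma_kTau_mk_eq_bNum :
    ∃ X : Set Cantor, X.Infinite ∧ ¬ SFin X (KGamma X) (KTau X) ∧ #X = bNum := by
  obtain ⟨G, hmono, hunb, hG⟩ := exists_monotone_unbounded_mk_eq_bNum
  have hX : #(arraySpace (witnessArrays G)) = bNum :=
    (mk_preimage_equiv cantorEquivArr _).trans (mk_witnessArrays hG)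
  have : Infinite (arraySpace (witnessArrays G)) := infinite_iff.2 (hX ▸ aleph0_le_bNum)
  exact ⟨_, infinite_coe_iff.1 this, not_sFin_kGamma_kTau_witnessArrays hmono hunb, hX⟩

theorem nonP_eq_of_forall_mk_lt {P : Set Cantor → Prop} {κ : Cardinal}
    (hsmall : ∀ X : Set Cantor, #X < κ → P X)
    (hX : ∃ X : Set Cantor, X.Infinite ∧ ¬ P X ∧ #X = κ) : nonP P = κ := by
  refine le_antisymm (csInf_le' hX) (le_csInf ⟨κ, hX⟩ ?_)
  rintro _ ⟨Y, -, hY, rfl⟩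
  by_contra hlt
  exact hY (hsmall Y (not_le.1 hlt))

/-- The critical cardinalities of Sfin(Γ,Τ) and Sfin(C_Γ,C_Τ) are both 𝔟. -/
theorem stmt3 :
    nonP (fun X => SFin ↥X (OGamma ↥X) (OTau ↥X)) = bNum ∧
    nonP (fun X => SFin ↥X (KGamma ↥X) (KTau ↥X)) = bNum := by
  obtain ⟨X, hXinf, hXnot, hXcard⟩ := exists_infinite_not_sFin_kGamma_kTau_mk_eq_bNum
  exact ⟨nonP_eq_of_forall_mk_lt (fun Y hY => sFin_gammaCover_tauCover_of_mk_lt_bNum hY IsOpen)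
      ⟨X, hXinf, fun h => hXnot h.kGamma_kTau, hXcard⟩,
    nonP_eq_of_forall_mk_lt (fun Y hY => sFin_gammaCover_tauCover_of_mk_lt_bNum hY IsClopen)
      ⟨X, hXinf, hXnot, hXcard⟩⟩
end
end

section
/- The critical cardinalities of S1(Τ,Ω) and S1(Τ,O) are equal: non(S1(Τ,Ω)) = non(S1(Τ,O)). -/
open Set Filter Cardinal
open scoped Classical

noncomputable section

/-!
If `X` fails S1(Τ,Ω), then some finite power `X^(k+1)` fails S1(Τ,O). Indeed, for a τ-cover `𝒰`
of `X` the cubes `U^(k+1)`, `U ∈ 𝒰`, form a τ-cover of `X^(k+1)`: the members of `𝒰` containing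
all coordinates of a tuple are, up to finitely many, those containing its almost-least coordinate.
Spreading a sequence of τ-covers of `X` over all the powers, a selection covering every power
is an ω-cover of `X`. A finite power of `X ⊆ 2^ℕ` embeds into `2^ℕ` and has the cardinality of
`X`, which gives non(S1(Τ,O)) ≤ non(S1(Τ,Ω)); the other inequality holds because ω-covers are
covers.
-/

theorem exists_diff_iInter_finite {ι β : Type*} [Finite ι] [Nonempty ι] {s : ι → Set β}
    (h : ∀ i j, (s i \ s j).Finite ∨ (s j \ s i).Finite) : ∃ i₀, (s i₀ \ ⋂ i, s i).Finite := by
  -- almost inclusion is a total preorder on the indices, and finite preorders have minimal elements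
  let _ : Preorder ι :=
    { le i j := (s i \ s j).Finite
      le_refl i := by simp
      le_trans i j k hij hjk := (hij.union hjk).subset (sdiff_triangle _ _ _) }
  obtain ⟨i₀, -, hmin⟩ :=
    exists_minimal_of_wellFoundedLT (fun _ : ι => True) ⟨Classical.arbitrary ι, trivial⟩
  refine ⟨i₀, ?_⟩
  rw [Set.sdiff_iInter]
  exact Set.finite_iUnion fun i => (h i₀ i).elim id fun hi => hmin trivial hi

theorem Set.Finite.exists_fin_succ_range_eq {α : Type*} {F : Set α} (hF : F.Finite)
    (hne : F.Nonempty) : ∃ (k : ℕ) (f : Fin (k + 1) → α), range f = F := by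
  obtain ⟨n, f, rfl⟩ := hF.fin_embedding
  obtain ⟨x, hx⟩ := hne
  exact ⟨n, Fin.cons x f, by rw [Fin.range_cons, insert_eq_of_mem hx]⟩

section SelectionPrinciples

variable {α β : Type*}

theorem setOf_mem_and_mem_and_notMem (𝒰 : Set (Set α)) (x y : α) :
    {U | U ∈ 𝒰 ∧ x ∈ U ∧ y ∉ U} = {U | U ∈ 𝒰 ∧ x ∈ U} \ {U | U ∈ 𝒰 ∧ y ∈ U} := by
  ext U
  simp only [mem_ofPred_eq, Set.mem_sdiff]
  tauto

theorem CountCover.preimage {f : α → β} (hf : Function.Surjective f) {𝒱 : Set (Set β)}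
    (h : CountCover β 𝒱) : CountCover α ((f ⁻¹' ·) '' 𝒱) := by
  obtain ⟨hcount, hcover, huniv⟩ := h
  refine ⟨hcount.image _, ?_, ?_⟩
  · rw [sUnion_image, ← preimage_iUnion₂, ← sUnion_eq_biUnion, hcover, preimage_univ]
  · rintro ⟨V, hV, hVuniv⟩
    rw [preimage_eq_univ_iff, hf.range_eq, univ_subset_iff] at hVuniv
    exact huniv (hVuniv ▸ hV)

theorem TauCover.preimage {f : α → β} (hf : Function.Surjective f) {𝒱 : Set (Set β)}
    (h : TauCover β 𝒱) : TauCover α ((f ⁻¹' ·) '' 𝒱) := by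
  obtain ⟨hcover, hinf, hcomp⟩ := h
  simp only [setOf_mem_and_mem_and_notMem] at hcomp
  have htrace : ∀ x, {U | U ∈ (f ⁻¹' ·) '' 𝒱 ∧ x ∈ U} = (f ⁻¹' ·) '' {V | V ∈ 𝒱 ∧ f x ∈ V} := by
    intro x
    ext U
    simp only [mem_ofPred_eq, mem_image]
    constructor
    · rintro ⟨⟨V, hV, rfl⟩, hx⟩
      exact ⟨V, ⟨hV, hx⟩, rfl⟩
    · rintro ⟨V, ⟨hV, hx⟩, rfl⟩
      exact ⟨⟨V, hV, rfl⟩, hx⟩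
  refine ⟨hcover.preimage hf, fun x => ?_, fun x y => ?_⟩
  · rw [htrace]
    exact (hinf (f x)).image hf.preimage_injective.injOn
  · simp only [setOf_mem_and_mem_and_notMem, htrace, ← image_sdiff hf.preimage_injective]
    exact (hcomp (f x) (f y)).imp (·.image _) (·.image _)

theorem S1.mono_right {𝒜 ℬ ℬ' : Set (Set α) → Prop} (hℬ : ∀ 𝒰, ℬ 𝒰 → ℬ' 𝒰)
    (h : S1 α 𝒜 ℬ) : S1 α 𝒜 ℬ' :=
  fun U hU => (h U hU).imp fun _ hV => ⟨hV.1, hℬ _ hV.2⟩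

theorem univ_pi_const_injective (ι : Type*) [Nonempty ι] :
    Function.Injective fun U : Set α => univ.pi fun _ : ι => U := by
  intro U V hUV
  ext x
  simpa using congrArg (Function.const ι x ∈ ·) hUV

theorem setOf_mem_image_univ_pi {ι : Type*} [Nonempty ι] (𝒰 : Set (Set α)) (f : ι → α) :
    {V | V ∈ (fun U => univ.pi fun _ : ι => U) '' 𝒰 ∧ f ∈ V} =
      (fun U => univ.pi fun _ : ι => U) '' ⋂ i, {U | U ∈ 𝒰 ∧ f i ∈ U} := by
  ext V
  simp only [mem_ofPred_eq, mem_image, mem_iInter]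
  constructor
  · rintro ⟨⟨U, hU, rfl⟩, hf⟩
    exact ⟨U, fun i => ⟨hU, mem_univ_pi.mp hf i⟩, rfl⟩
  · rintro ⟨U, hU, rfl⟩
    exact ⟨⟨U, (hU (Classical.arbitrary ι)).1, rfl⟩, mem_univ_pi.mpr fun i => (hU i).2⟩

theorem TauCover.pi {ι : Type*} [Finite ι] [Nonempty ι] {𝒰 : Set (Set α)} (h : TauCover α 𝒰) :
    TauCover (ι → α) ((fun U => univ.pi fun _ : ι => U) '' 𝒰) := by
  obtain ⟨⟨hcount, -, huniv⟩, hinf, hcomp⟩ := h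
  simp only [setOf_mem_and_mem_and_notMem] at hcomp
  set T : α → Set (Set α) := fun x => {U | U ∈ 𝒰 ∧ x ∈ U}
  have hinj := univ_pi_const_injective (α := α) ι
  have htrace := setOf_mem_image_univ_pi (ι := ι) 𝒰
  have halmost : ∀ f : ι → α, ∃ x, (⋂ i, T (f i)) ⊆ T x ∧ (T x \ ⋂ i, T (f i)).Finite := fun f =>
    have ⟨i₀, hi₀⟩ := exists_diff_iInter_finite fun i j => hcomp (f i) (f j)
    ⟨f i₀, iInter_subset _ i₀, hi₀⟩
  have hinf' : ∀ f : ι → α, (⋂ i, T (f i)).Infinite := fun f hfin =>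
    have ⟨x, _, hx⟩ := halmost f
    hinf x (hx.of_sdiff hfin)
  refine ⟨⟨hcount.image _, eq_univ_of_forall fun f => ?_, fun huniv' => ?_⟩,
    fun f => ?_, fun f g => ?_⟩
  · obtain ⟨V, hV, hfV⟩ := ((htrace f).symm ▸ (hinf' f).image hinj.injOn).nonempty
    exact ⟨V, hV, hfV⟩
  · obtain ⟨U, hU, hUuniv⟩ := huniv'
    exact huniv (hinj (hUuniv.trans (pi_univ _).symm) ▸ hU)
  · exact htrace f ▸ (hinf' f).image hinj.injOn
  · simp only [setOf_mem_and_mem_and_notMem, htrace, ← image_sdiff hinj]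
    obtain ⟨x, hfx, hx⟩ := halmost f
    obtain ⟨y, hgy, hy⟩ := halmost g
    refine (hcomp x y).imp (fun hxy => ?_) (fun hyx => ?_) <;> refine Finite.image _ ?_
    · exact (hxy.union hy).subset
        ((sdiff_triangle _ (T y) _).trans (union_subset_union_left _ (sdiff_subset_sdiff_left hfx)))
    · exact (hyx.union hx).subset
        ((sdiff_triangle _ (T x) _).trans (union_subset_union_left _ (sdiff_subset_sdiff_left hgy)))

variable [TopologicalSpace α] [TopologicalSpace β]

theorem OpenFam.preimage {f : α → β} (hf : Continuous f) {𝒱 : Set (Set β)} (h : OpenFam β 𝒱) :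
    OpenFam α ((f ⁻¹' ·) '' 𝒱) := by
  rintro _ ⟨V, hV, rfl⟩
  exact (h V hV).preimage hf

theorem s1_oTau_oCov_of_homeomorph (e : α ≃ₜ β) (h : S1 β (OTau β) (OCov β)) :
    S1 α (OTau α) (OCov α) := by
  intro U hU
  obtain ⟨W, hWU, hW⟩ := h (fun n => (e.symm ⁻¹' ·) '' U n) fun n =>
    ⟨(hU n).1.preimage e.symm.surjective, (hU n).2.preimage e.symm.continuous⟩
  choose V hVU hVW using hWU
  refine ⟨V, hVU, ?_⟩
  have hrange : range V = (e ⁻¹' ·) '' range W := by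
    rw [← range_comp]
    congr 1
    funext n
    exact (e.toEquiv.preimage_symm_preimage (V n)).symm.trans (congrArg (e ⁻¹' ·) (hVW n))
  rw [hrange]
  exact ⟨hW.1.preimage e.surjective, hW.2.preimage e.continuous⟩

theorem OTau.pi {ι : Type*} [Finite ι] [Nonempty ι] {𝒰 : Set (Set α)} (h : OTau α 𝒰) :
    OTau (ι → α) ((fun U => univ.pi fun _ : ι => U) '' 𝒰) := by
  refine ⟨h.1.pi, ?_⟩
  rintro _ ⟨U, hU, rfl⟩
  exact isOpen_set_pi finite_univ fun _ _ => h.2 U hU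

theorem s1_oTau_oOmega_of_forall_pi (h : ∀ k : ℕ, S1 (Fin (k + 1) → α) (OTau _) (OCov _)) :
    S1 α (OTau α) (OOmega α) := by
  intro U hU
  -- the `k`-th subsequence `j ↦ U (Nat.pair k j)` is used to cover the `(k+1)`-tuples
  have hsel : ∀ k, ∃ W : ℕ → Set α, (∀ j, W j ∈ U (Nat.pair k j)) ∧
      ⋃ j, univ.pi (fun _ : Fin (k + 1) => W j) = Set.univ := by
    intro k
    obtain ⟨V, hVU, hV⟩ :=
      h k (fun j => (fun W => univ.pi fun _ => W) '' U (Nat.pair k j)) fun j => (hU _).pi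
    choose W hWU hWV using hVU
    refine ⟨W, hWU, ?_⟩
    simpa only [sUnion_range, ← hWV] using hV.1.2.1
  choose W hWU hWcover using hsel
  set V : ℕ → Set α := fun n => W n.unpair.1 n.unpair.2
  have hVU : ∀ n, V n ∈ U n := fun n => by simpa [V] using hWU n.unpair.1 n.unpair.2
  have homega : ∀ F : Set α, F.Finite → ∃ U ∈ range V, F ⊆ U := by
    intro F hF
    rcases F.eq_empty_or_nonempty with rfl | hne
    · exact ⟨V 0, mem_range_self 0, empty_subset _⟩
    obtain ⟨k, f, rfl⟩ := hF.exists_fin_succ_range_eq hne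
    obtain ⟨j, hj⟩ := mem_iUnion.mp (hWcover k ▸ mem_univ f)
    exact ⟨W k j, ⟨Nat.pair k j, by simp [V]⟩, range_subset_iff.mpr (mem_univ_pi.mp hj)⟩
  refine ⟨V, hVU, ⟨⟨countable_range V, eq_univ_of_forall fun x => ?_, ?_⟩, homega⟩, ?_⟩
  · obtain ⟨U, hU, hx⟩ := homega {x} (finite_singleton x)
    exact ⟨U, hU, hx rfl⟩
  · rintro ⟨n, hn⟩
    exact (hU n).1.1.2.2 (hn ▸ hVU n)
  · rintro _ ⟨n, rfl⟩
    exact (hU n).2 _ (hVU n)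

end SelectionPrinciples

theorem exists_homeomorph_pi_subset_cantor (X : Set Cantor) (ι : Type*) [Countable ι]
    [Nonempty ι] : ∃ Y : Set Cantor, Nonempty ((ι → X) ≃ₜ Y) := by
  obtain ⟨e⟩ := nonempty_equiv_of_countable (α := ι × ℕ) (β := ℕ)
  let E : (ι → Cantor) ≃ₜ Cantor :=
    Homeomorph.piCurry.symm.trans (Homeomorph.piCongrLeft (Y := fun _ => Bool) e)
  exact ⟨_, ⟨(E.isEmbedding.comp (.piMap fun _ => .subtypeVal)).toHomeomorph⟩⟩

theorem nonP_eq_of_forall_exists_le {P Q : Set Cantor → Prop}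
    (hPQ : ∀ X : Set Cantor, X.Infinite → ¬ P X → ∃ Y : Set Cantor, Y.Infinite ∧ ¬ Q Y ∧ #Y ≤ #X)
    (hQP : ∀ Y : Set Cantor, Y.Infinite → ¬ Q Y → ∃ X : Set Cantor, X.Infinite ∧ ¬ P X ∧ #X ≤ #Y) :
    nonP P = nonP Q := by
  refine csInf_eq_csInf_of_forall_exists_le ?_ ?_
  · rintro _ ⟨X, hX, hPX, rfl⟩
    obtain ⟨Y, hY, hQY, hYX⟩ := hPQ X hX hPX
    exact ⟨_, ⟨Y, hY, hQY, rfl⟩, hYX⟩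
  · rintro _ ⟨Y, hY, hQY, rfl⟩
    obtain ⟨X, hX, hPX, hXY⟩ := hQP Y hY hQY
    exact ⟨_, ⟨X, hX, hPX, rfl⟩, hXY⟩

/-- non(S1(Τ,Ω)) = non(S1(Τ,O)). -/
theorem stmt12 :
    nonP (fun X => S1 ↥X (OTau ↥X) (OOmega ↥X)) =
      nonP (fun X => S1 ↥X (OTau ↥X) (OCov ↥X)) := by
  refine nonP_eq_of_forall_exists_le (fun X hX hPX => ?_) fun Y hY hQY =>
    ⟨Y, hY, fun hP => hQY (hP.mono_right fun _ h => ⟨h.1.1, h.2⟩), le_rfl⟩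
  obtain ⟨k, hk⟩ : ∃ k : ℕ, ¬ S1 (Fin (k + 1) → X) (OTau _) (OCov _) := by
    by_contra! h
    exact hPX (s1_oTau_oOmega_of_forall_pi h)
  obtain ⟨Y, ⟨e⟩⟩ := exists_homeomorph_pi_subset_cantor X (Fin (k + 1))
  have hX' : ℵ₀ ≤ #X := Cardinal.infinite_iff.mp hX.to_subtype
  have hYX : #Y = #X := by
    rw [← Cardinal.mk_congr e.toEquiv, ← power_def, mk_fin, power_natCast]
    exact power_nat_eq hX' k.succ_pos
  refine ⟨Y, ?_, fun hQ => hk (s1_oTau_oCov_of_homeomorph e hQ), hYX.le⟩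
  rw [← infinite_coe_iff, Cardinal.infinite_iff, hYX]
  exact hX'
end
end
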